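/- For any n ≥ 3, any β ∈ (0,1), and any strictly positive probability vector η, the ring graph on n nodes (each node linked bidirectionally to its two neighbors on a cycle) is a strict Nash equilibrium of the centrality game with m = 2. In particular, for a ring and any node s with cycle-neighbors labeled 1,…,n−1, the hitting times satisfy τ_1^s < τ_2^s. -/

import Mathlib

open Finset Matrix

/-- Normalized adjacency matrix of the out-degree-2 graph `G(x)` where each node `i`
places out-links to the two nodes of `x i` (entries `1/2` on out-links). -/
noncomputable def R2 {V : Type*} [Fintype V] [DecidableEq V] (x : V → Finset V) :
    Matrix V V ℝ :=
  Matrix.of fun i j => if j ∈ x i then (1 : ℝ) / 2 else 0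

/-- Utility of player `s` in the game `Γ(V, β, η, 2)`: its Bonacich centrality
`((1-β)(I - β R(x)ᵀ)⁻¹ η)_s` in the formed graph. -/
noncomputable def util2 {V : Type*} [Fintype V] [DecidableEq V]
    (β : ℝ) (η : V → ℝ) (x : V → Finset V) (s : V) : ℝ :=
  ((1 - β) • ((1 - β • (R2 x)ᵀ)⁻¹).mulVec η) s

/-- The ring configuration on `ZMod n`: each node links to its two cycle neighbors. -/
def ringConf (n : ℕ) [NeZero n] : ZMod n → Finset (ZMod n) :=
  fun i => {i + 1, i - 1}

/-!
Write `A = 1 - β Rᵀ`, so that `u_s = (1 - β) (A⁻¹ η)_s`. A deviation of `s` changes only column `s`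
of `A` by some vector `w`; this is a rank-one update, and the Sherman–Morrison formula gives
`u_s' = u_s / (1 + z_s)` with `A z = w`. If `Aᵀ g = κ e_s` with `κ > 0`, then
`κ z_s = g ⬝ w = (β/2) (∑_{j ∈ x s} g_j - ∑_{j ∈ b} g_j)`. On the ring one can take
`g_j = λ^d + λ^(n-d)`, `d = val (j - s)`, where `λ ∈ (0,1)` solves `β (1 + λ²) = 2 λ`; among
`j ≠ s` it is largest exactly at the two neighbours of `s`, so every deviation lowers `u_s`.

For the hitting times, the minimum principle gives `τ_i ≥ 1` for `i ≠ 0`, and subtracting the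
equations at `1` and `2` gives `(1 + β/2) (τ_2 - τ_1) = (β/2) τ_3 > 0`.
-/

namespace Matrix

variable {V K : Type*}

theorem isUnit_det_one_sub_smul_transpose [Fintype V] [DecidableEq V] {P : Matrix V V ℝ}
    (hP0 : ∀ i j, 0 ≤ P i j) (hP1 : ∀ i, ∑ j, P i j ≤ 1) {β : ℝ} (hβ0 : 0 ≤ β) (hβ1 : β < 1) :
    IsUnit (1 - β • Pᵀ).det := by
  refine isUnit_iff_ne_zero.2 (det_ne_zero_of_sum_col_lt_diag fun k => ?_)
  have hoff : ∀ i ∈ univ.erase k, ‖(1 - β • Pᵀ) i k‖ = β * P k i := fun i hi => by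
    simp [ne_of_mem_erase hi, abs_of_nonneg hβ0, abs_of_nonneg (hP0 k i)]
  have hkk : P k k ≤ 1 := (single_le_sum (fun j _ => hP0 k j) (mem_univ k)).trans (hP1 k)
  have hdiag : ‖(1 - β • Pᵀ) k k‖ = 1 - β * P k k := by
    simp only [sub_apply, one_apply_eq, smul_apply, transpose_apply, smul_eq_mul,
      Real.norm_eq_abs]
    exact abs_of_nonneg (by nlinarith [hP0 k k])
  rw [sum_congr rfl hoff, ← mul_sum, sum_erase_eq_sub (mem_univ k), hdiag]
  nlinarith [hP1 k]

theorem inv_mulVec_eq_of_mulVec_eq [Fintype V] [DecidableEq V] [CommRing K] {A : Matrix V V K}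
    (hA : IsUnit A.det) {x b : V → K} (h : A *ᵥ x = b) : A⁻¹ *ᵥ b = x := by
  rw [← h, mulVec_mulVec, nonsing_inv_mul _ hA, one_mulVec]

theorem transpose_updateRow_eq_add [DecidableEq V] [Ring K] (A : Matrix V V K) (s : V)
    (r : V → K) : (A.updateRow s r)ᵀ = Aᵀ + vecMulVec (r - A s) (Pi.single s 1) := by
  ext i j
  by_cases hj : j = s
  · subst hj; simp [vecMulVec_apply]
  · simp [hj, vecMulVec_apply]

theorem add_vecMulVec_mulVec_sub_smul [Fintype V] [Field K] {A : Matrix V V K}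
    {y z b w v : V → K} (hy : A *ᵥ y = b) (hz : A *ᵥ z = w) (hv : 1 + v ⬝ᵥ z ≠ 0) :
    (A + vecMulVec w v) *ᵥ (y - (v ⬝ᵥ y / (1 + v ⬝ᵥ z)) • z) = b := by
  rw [add_mulVec, mulVec_sub, mulVec_smul, hy, hz, vecMulVec_mulVec, dotProduct_sub,
    dotProduct_smul]
  ext i
  simp only [Pi.add_apply, Pi.sub_apply, Pi.smul_apply, smul_eq_mul,
    MulOpposite.smul_eq_mul_unop, MulOpposite.unop_op]
  field_simp
  ring

theorem mul_apply_eq_dotProduct_mulVec_of_transpose_mulVec_eq_single [Fintype V] [DecidableEq V]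
    [CommSemiring K] {A : Matrix V V K} {g z : V → K} {s : V} {κ : K}
    (hg : Aᵀ *ᵥ g = Pi.single s κ) :
    κ * z s = g ⬝ᵥ (A *ᵥ z) := by
  rw [dotProduct_mulVec, ← mulVec_transpose, hg, single_dotProduct]

end Matrix

section Deviation

variable {V : Type*} [Fintype V] [DecidableEq V]

theorem R2_nonneg (x : V → Finset V) (i j : V) : 0 ≤ R2 x i j := by
  simp only [R2, of_apply]; split_ifs <;> norm_num

theorem dotProduct_R2_row (x : V → Finset V) (i : V) (v : V → ℝ) :
    v ⬝ᵥ R2 x i = (∑ j ∈ x i, v j) / 2 := by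
  simp only [dotProduct, R2, of_apply, mul_ite, mul_zero, sum_ite_mem_eq, sum_div, mul_one_div]

theorem sum_R2_row (x : V → Finset V) (i : V) : ∑ j, R2 x i j = (x i).card / 2 := by
  simpa [dotProduct] using dotProduct_R2_row x i 1

theorem R2_update (x : V → Finset V) (s : V) (b : Finset V) :
    R2 (Function.update x s b) = (R2 x).updateRow s (R2 (fun _ => b) s) := by
  ext i j
  by_cases hi : i = s
  · subst hi; simp [R2]
  · simp [R2, hi]

theorem isUnit_det_one_sub_smul_transpose_R2 {β : ℝ} (hβ0 : 0 ≤ β) (hβ1 : β < 1)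
    {x : V → Finset V} (hx : ∀ i, (x i).card ≤ 2) : IsUnit (1 - β • (R2 x)ᵀ).det :=
  isUnit_det_one_sub_smul_transpose (R2_nonneg x)
    (fun i => by rw [sum_R2_row, div_le_one two_pos]; exact_mod_cast hx i) hβ0 hβ1

theorem util2_eq_of_mulVec_eq {β : ℝ} (hβ0 : 0 ≤ β) (hβ1 : β < 1) {x : V → Finset V}
    (hx : ∀ i, (x i).card ≤ 2) {η y : V → ℝ} (hy : (1 - β • (R2 x)ᵀ) *ᵥ y = η) (s : V) :
    util2 β η x s = (1 - β) * y s := by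
  rw [util2, inv_mulVec_eq_of_mulVec_eq (isUnit_det_one_sub_smul_transpose_R2 hβ0 hβ1 hx) hy]
  rfl

theorem util2_update_lt {β : ℝ} (hβ0 : 0 < β) (hβ1 : β < 1) {x : V → Finset V}
    (hx : ∀ i, (x i).card ≤ 2) {s : V} {b : Finset V} (hb : b.card ≤ 2) {κ : ℝ} (hκ : 0 < κ)
    {g η : V → ℝ} (hg : (1 - β • R2 x) *ᵥ g = Pi.single s κ) (hgη : 0 < g ⬝ᵥ η)
    (hgb : ∑ j ∈ b, g j < ∑ j ∈ x s, g j) :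
    util2 β η (Function.update x s b) s < util2 β η x s := by
  set A := 1 - β • (R2 x)ᵀ
  have hA := isUnit_det_one_sub_smul_transpose_R2 hβ0.le hβ1 hx
  have hAg : Aᵀ *ᵥ g = Pi.single s κ := by simpa [A] using hg
  set w := β • (R2 x s - R2 (fun _ => b) s)
  have hA' : 1 - β • (R2 (Function.update x s b))ᵀ = A + vecMulVec w (Pi.single s 1) := by
    have hw : β • (R2 (fun _ => b) s - R2 x s) = -w := by simp only [w, smul_sub, neg_sub]
    rw [R2_update, transpose_updateRow_eq_add, smul_add, ← smul_vecMulVec, hw, neg_vecMulVec]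
    simp only [A]
    abel
  set y := A⁻¹ *ᵥ η
  set z := A⁻¹ *ᵥ w
  have hy : A *ᵥ y = η := by rw [mulVec_mulVec, mul_nonsing_inv _ hA, one_mulVec]
  have hz : A *ᵥ z = w := by rw [mulVec_mulVec, mul_nonsing_inv _ hA, one_mulVec]
  have hys : 0 < y s := by
    have := mul_apply_eq_dotProduct_mulVec_of_transpose_mulVec_eq_single (z := y) hAg
    rw [hy] at this
    exact pos_of_mul_pos_right (this ▸ hgη) hκ.le
  have hzs : 0 < z s := by
    have := mul_apply_eq_dotProduct_mulVec_of_transpose_mulVec_eq_single (z := z) hAg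
    rw [hz, dotProduct_smul, dotProduct_sub, dotProduct_R2_row, dotProduct_R2_row] at this
    refine pos_of_mul_pos_right (this ▸ ?_) hκ.le
    simp only [smul_eq_mul]
    nlinarith
  have hdev := add_vecMulVec_mulVec_sub_smul hy hz (v := Pi.single s 1)
    (by rw [single_dotProduct]; linarith)
  rw [← hA'] at hdev
  have hx' : ∀ i, (Function.update x s b i).card ≤ 2 := fun i => by
    by_cases hi : i = s
    · subst hi; simpa using hb
    · simpa [hi] using hx i
  rw [util2_eq_of_mulVec_eq hβ0.le hβ1 hx hy, util2_eq_of_mulVec_eq hβ0.le hβ1 hx' hdev]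
  simp only [Pi.sub_apply, Pi.smul_apply, smul_eq_mul, single_dotProduct, one_mul]
  exact mul_lt_mul_of_pos_left (sub_lt_self _ (by positivity)) (by linarith)

end Deviation

theorem pow_add_pow_sub_sub_mul_eq_zero {n : ℕ} {β l : ℝ} (hl : β * (1 + l ^ 2) = 2 * l) {k : ℕ}
    (hk : k + 2 ≤ n) :
    l ^ (k + 1) + l ^ (n - (k + 1))
      - β / 2 * ((l ^ (k + 2) + l ^ (n - (k + 2))) + (l ^ k + l ^ (n - k))) = 0 := by
  obtain ⟨r, rfl⟩ := Nat.exists_eq_add_of_le hk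
  rw [show k + 2 + r - (k + 1) = r + 1 by omega, show k + 2 + r - (k + 2) = r by omega,
    show k + 2 + r - k = r + 2 by omega]
  linear_combination (-(l ^ k + l ^ r) / 2) * hl

theorem pow_add_pow_sub_lt {n : ℕ} {l : ℝ} (hl0 : 0 < l) (hl1 : l < 1) {a : ℕ} (ha : 2 ≤ a)
    (han : a + 2 ≤ n) : l ^ a + l ^ (n - a) < l + l ^ (n - 1) := by
  obtain ⟨p, rfl⟩ := Nat.exists_eq_add_of_le ha
  obtain ⟨q, rfl⟩ := Nat.exists_eq_add_of_le han
  rw [show 2 + p + 2 + q - (2 + p) = q + 2 by omega, show 2 + p + 2 + q - 1 = p + q + 3 by omega]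
  have hp : l ^ (p + 1) < 1 := pow_lt_one₀ hl0.le hl1 (by omega)
  have hq : l ^ (q + 2) < l := pow_lt_self_of_lt_one₀ hl0 hl1 (by omega)
  have key : l + l ^ (p + q + 3) - (l ^ (2 + p) + l ^ (q + 2))
      = (1 - l ^ (p + 1)) * (l - l ^ (q + 2)) := by ring
  linarith [mul_pos (sub_pos.2 hp) (sub_pos.2 hq)]

def ringGreen (n : ℕ) (l : ℝ) (m : ZMod n) : ℝ := l ^ m.val + l ^ (n - m.val)

section Ring

variable {n : ℕ} [NeZero n]

omit [NeZero n] in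
theorem natCast_ne_zero_of_lt {k : ℕ} (hk0 : 0 < k) (hkn : k < n) : (k : ZMod n) ≠ 0 := by
  rw [Ne, ZMod.natCast_eq_zero_iff]
  exact Nat.not_dvd_of_pos_of_lt hk0 hkn

theorem neg_one_eq_natCast : (-1 : ZMod n) = ((n - 1 : ℕ) : ZMod n) := by
  rw [Nat.cast_pred (NeZero.pos n), ZMod.natCast_self, zero_sub]

omit [NeZero n] in
theorem add_one_ne_sub_one (hn : 3 ≤ n) (i : ZMod n) : i + 1 ≠ i - 1 := fun h =>
  natCast_ne_zero_of_lt (n := n) (k := 2) two_pos (by omega) (by push_cast; linear_combination h)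

theorem card_ringConf (hn : 3 ≤ n) (i : ZMod n) : (ringConf n i).card = 2 :=
  card_pair (add_one_ne_sub_one hn i)

theorem R2_ringConf_mulVec (hn : 3 ≤ n) (v : ZMod n → ℝ) (i : ZMod n) :
    (R2 (ringConf n) *ᵥ v) i = (v (i + 1) + v (i - 1)) / 2 := by
  rw [mulVec, dotProduct_comm, dotProduct_R2_row, ringConf, sum_pair (add_one_ne_sub_one hn i)]

variable {l : ℝ}

theorem ringGreen_natCast {a : ℕ} (ha : a ≤ n) : ringGreen n l a = l ^ a + l ^ (n - a) := by
  rcases ha.lt_or_eq with ha | rfl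
  · rw [ringGreen, ZMod.val_cast_of_lt ha]
  · simp [ringGreen, add_comm]

omit [NeZero n] in
theorem ringGreen_zero : ringGreen n l 0 = 1 + l ^ n := by simp [ringGreen]

theorem ringGreen_one : ringGreen n l 1 = l + l ^ (n - 1) := by
  simpa using ringGreen_natCast (n := n) (l := l) (a := 1) (NeZero.pos n)

theorem ringGreen_neg_one : ringGreen n l (-1) = ringGreen n l 1 := by
  rw [neg_one_eq_natCast, ringGreen_natCast (Nat.sub_le n 1), ringGreen_one,
    Nat.sub_sub_self (NeZero.pos n), pow_one, add_comm]

omit [NeZero n] in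
theorem ringGreen_pos (hl : 0 < l) (m : ZMod n) : 0 < ringGreen n l m := by
  unfold ringGreen; positivity

theorem ringGreen_sub_eq {β : ℝ} (hl : β * (1 + l ^ 2) = 2 * l) (m : ZMod n) :
    ringGreen n l m - β / 2 * (ringGreen n l (m + 1) + ringGreen n l (m - 1))
      = if m = 0 then 1 + l ^ n - β * (l + l ^ (n - 1)) else 0 := by
  obtain ⟨a, ha, rfl⟩ : ∃ a < n, (a : ZMod n) = m := ⟨m.val, m.val_lt, m.natCast_zmod_val⟩
  rcases a with _ | k
  · rw [Nat.cast_zero, zero_add, zero_sub, ringGreen_neg_one, ringGreen_zero, ringGreen_one,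
      if_pos rfl]
    ring
  · rw [if_neg (natCast_ne_zero_of_lt k.succ_pos ha),
      show (k.succ : ZMod n) + 1 = ((k + 2 : ℕ) : ZMod n) by push_cast; ring,
      show (k.succ : ZMod n) - 1 = (k : ZMod n) by push_cast; ring,
      ringGreen_natCast ha.le, ringGreen_natCast ha, ringGreen_natCast (by omega)]
    exact pow_add_pow_sub_sub_mul_eq_zero hl ha

theorem ringGreen_lt_one (hl0 : 0 < l) (hl1 : l < 1) {m : ZMod n} (h0 : m ≠ 0) (h1 : m ≠ 1)
    (h2 : m ≠ -1) : ringGreen n l m < ringGreen n l 1 := by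
  obtain ⟨a, ha, rfl⟩ : ∃ a < n, (a : ZMod n) = m := ⟨m.val, m.val_lt, m.natCast_zmod_val⟩
  have ha0 : a ≠ 0 := by rintro rfl; exact h0 Nat.cast_zero
  have ha1 : a ≠ 1 := by rintro rfl; exact h1 Nat.cast_one
  have ha2 : a ≠ n - 1 := by rintro rfl; exact h2 neg_one_eq_natCast.symm
  rw [ringGreen_natCast ha.le, ringGreen_one]
  exact pow_add_pow_sub_lt hl0 hl1 (by omega) (by omega)

theorem ringGreen_le_one (hl0 : 0 < l) (hl1 : l < 1) {m : ZMod n} (h0 : m ≠ 0) :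
    ringGreen n l m ≤ ringGreen n l 1 := by
  by_cases h1 : m = 1
  · rw [h1]
  by_cases h2 : m = -1
  · rw [h2, ringGreen_neg_one]
  exact (ringGreen_lt_one hl0 hl1 h0 h1 h2).le

theorem one_add_pow_sub_mul_add_pow_pos {β : ℝ} (hβ1 : β < 1) (hl0 : 0 < l) (hl1 : l < 1) :
    0 < 1 + l ^ n - β * (l + l ^ (n - 1)) := by
  have hpow : l ^ n = l * l ^ (n - 1) := by rw [← pow_succ', Nat.sub_add_cancel (NeZero.pos n)]
  have hle : l ^ (n - 1) ≤ 1 := pow_le_one₀ hl0.le hl1.le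
  nlinarith [pow_pos hl0 (n - 1)]

theorem one_sub_smul_R2_ringConf_mulVec_ringGreen (hn : 3 ≤ n) {β : ℝ}
    (hl : β * (1 + l ^ 2) = 2 * l) (s : ZMod n) :
    (1 - β • R2 (ringConf n)) *ᵥ (fun j => ringGreen n l (j - s))
      = Pi.single s (1 + l ^ n - β * (l + l ^ (n - 1))) := by
  ext i
  have h := ringGreen_sub_eq hl (i - s)
  rw [show i - s + 1 = i + 1 - s by ring, show i - s - 1 = i - 1 - s by ring] at h
  simp only [sub_eq_zero] at h
  rw [sub_mulVec, one_mulVec, smul_mulVec, Pi.sub_apply, Pi.smul_apply, R2_ringConf_mulVec hn,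
    Pi.single_apply, smul_eq_mul, ← h]
  ring

end Ring

theorem exists_mul_one_add_sq_eq_two_mul {β : ℝ} (hβ0 : 0 < β) (hβ1 : β < 1) :
    ∃ l : ℝ, 0 < l ∧ l < 1 ∧ β * (1 + l ^ 2) = 2 * l := by
  set r := Real.sqrt (1 - β ^ 2)
  have hr : r ^ 2 = 1 - β ^ 2 := Real.sq_sqrt (by nlinarith)
  have hr0 : 0 ≤ r := Real.sqrt_nonneg _
  refine ⟨β / (1 + r), by positivity, (div_lt_one (by positivity)).2 (by linarith), ?_⟩
  field_simp
  linear_combination hr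

theorem util2_update_ringConf_lt {n : ℕ} [NeZero n] (hn : 3 ≤ n) {β : ℝ} (hβ0 : 0 < β)
    (hβ1 : β < 1) {η : ZMod n → ℝ} (hη : ∀ i, 0 < η i) {s : ZMod n} {b : Finset (ZMod n)}
    (hb2 : b.card = 2) (hsb : s ∉ b) (hbne : b ≠ ringConf n s) :
    util2 β η (Function.update (ringConf n) s b) s < util2 β η (ringConf n) s := by
  obtain ⟨l, hl0, hl1, hl⟩ := exists_mul_one_add_sq_eq_two_mul hβ0 hβ1
  obtain ⟨j, hjb, hjs⟩ : ∃ j ∈ b, j ∉ ringConf n s := not_subset.1 fun h =>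
    hbne (eq_of_subset_of_card_le h (by rw [card_ringConf hn, hb2]))
  have hle : ∀ j ∈ b, ringGreen n l (j - s) ≤ ringGreen n l 1 := fun j hj =>
    ringGreen_le_one hl0 hl1 (sub_ne_zero.2 (ne_of_mem_of_not_mem hj hsb))
  have hlt : ringGreen n l (j - s) < ringGreen n l 1 := by
    refine ringGreen_lt_one hl0 hl1 (sub_ne_zero.2 (ne_of_mem_of_not_mem hjb hsb))
      (fun h => hjs ?_) (fun h => hjs ?_) <;> simp only [ringConf, mem_insert, mem_singleton]
    · exact .inl (by linear_combination h)
    · exact .inr (by linear_combination h)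
  refine util2_update_lt hβ0 hβ1 (fun i => (card_ringConf hn i).le) hb2.le
    (one_add_pow_sub_mul_add_pow_pos hβ1 hl0 hl1)
    (one_sub_smul_R2_ringConf_mulVec_ringGreen hn hl s)
    (sum_pos (fun i _ => mul_pos (ringGreen_pos hl0 _) (hη i)) univ_nonempty) ?_
  calc ∑ j ∈ b, ringGreen n l (j - s)
      < ∑ _j ∈ b, ringGreen n l 1 := sum_lt_sum hle ⟨j, hjb, hlt⟩
    _ = ∑ j ∈ ringConf n s, ringGreen n l (j - s) := by
      rw [sum_const, hb2, ringConf, sum_pair (add_one_ne_sub_one hn s), add_sub_cancel_left,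
        sub_sub_cancel_left, ringGreen_neg_one, two_nsmul]

theorem one_le_of_eq_one_add_sum_mul {V : Type*} [Fintype V] {P : Matrix V V ℝ}
    (hP0 : ∀ i j, 0 ≤ P i j) (hP1 : ∀ i, ∑ j, P i j = 1) {o : V} {τ : V → ℝ} (hτo : τ o = 0)
    (hτ : ∀ i, i ≠ o → τ i = 1 + ∑ j, P i j * τ j) {i : V} (hi : i ≠ o) : 1 ≤ τ i := by
  obtain ⟨i₀, -, hmin⟩ := exists_min_image univ τ ⟨o, mem_univ o⟩
  have hlow : ∀ i, i ≠ o → 1 + τ i₀ ≤ τ i := fun i hi => by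
    have h := sum_le_sum fun j (_ : j ∈ univ) =>
      mul_le_mul_of_nonneg_left (hmin j (mem_univ j)) (hP0 i j)
    rw [← sum_mul, hP1, one_mul] at h
    linarith [hτ i hi]
  have hi₀ : i₀ = o := by
    by_contra h
    linarith [hlow i₀ h]
  linarith [hlow i hi, hi₀ ▸ hτo]

theorem ringConf_hittingTime_one_lt_two {n : ℕ} [NeZero n] (hn : 4 ≤ n) {β : ℝ} (hβ0 : 0 < β)
    (hβ1 : β < 1) {η : ZMod n → ℝ} (hη : ∀ i, 0 ≤ η i) (hηsum : ∑ i, η i = 1)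
    {τ : ZMod n → ℝ} (hτ0 : τ 0 = 0)
    (hτ : ∀ i, i ≠ 0 → τ i = 1 + ∑ j,
      (β * (if j ∈ ringConf n i then (1 : ℝ) / 2 else 0) + (1 - β) * η j) * τ j) :
    τ 1 < τ 2 := by
  have hrec : ∀ i, i ≠ 0 → τ i = 1 + β * ((τ (i + 1) + τ (i - 1)) / 2) + (1 - β) * (η ⬝ᵥ τ) :=
    fun i hi => by
      rw [hτ i hi, ← R2_ringConf_mulVec (by omega)]
      simp only [add_mul, sum_add_distrib, mul_assoc, ← mul_sum, mulVec, dotProduct, R2, of_apply]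
      ring
  have h1 : (1 : ZMod n) ≠ 0 := by
    exact_mod_cast natCast_ne_zero_of_lt (n := n) one_pos (by omega)
  have h2 : (2 : ZMod n) ≠ 0 := by
    exact_mod_cast natCast_ne_zero_of_lt (n := n) two_pos (by omega)
  have h3 : (3 : ZMod n) ≠ 0 := by
    exact_mod_cast natCast_ne_zero_of_lt (n := n) (k := 3) (by norm_num) (by omega)
  have hP1 : ∀ i, ∑ j, (β * R2 (ringConf n) i j + (1 - β) * η j) = 1 := fun i => by
    rw [sum_add_distrib, ← mul_sum, ← mul_sum, sum_R2_row, card_ringConf (by omega), hηsum]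
    norm_num
  have hτ3 : 1 ≤ τ 3 := one_le_of_eq_one_add_sum_mul
    (P := of fun i j => β * R2 (ringConf n) i j + (1 - β) * η j)
    (fun i j => add_nonneg (mul_nonneg hβ0.le (R2_nonneg _ i j))
      (mul_nonneg (by linarith) (hη j)))
    hP1 hτ0 hτ h3
  have e1 := hrec 1 h1
  have e2 := hrec 2 h2
  rw [one_add_one_eq_two, sub_self, hτ0] at e1
  rw [show (2 : ZMod n) + 1 = 3 by norm_num, show (2 : ZMod n) - 1 = 1 by norm_num] at e2
  nlinarith

/-- for any `n ≥ 3`, `β ∈ (0,1)` and strictly positive probability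
vector `η`, the ring graph on `n` nodes is a strict Nash equilibrium of
`Γ(V,β,η,2)`; moreover (ring of length `≥ 4`) the hitting times to a node `s = 0`
satisfy `τ 1 < τ 2`. -/
theorem ring_is_strict_nash_m2
    (n : ℕ) [NeZero n] (hn : 3 ≤ n)
    (β : ℝ) (hβ0 : 0 < β) (hβ1 : β < 1)
    (η : ZMod n → ℝ) (hη : ∀ i, 0 < η i) (hηsum : ∑ i, η i = 1) :
    (∀ (s : ZMod n) (b : Finset (ZMod n)), b.card = 2 → s ∉ b → b ≠ ringConf n s →
      util2 β η (Function.update (ringConf n) s b) s < util2 β η (ringConf n) s) ∧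
    (4 ≤ n → ∀ τ : ZMod n → ℝ, τ 0 = 0 →
      (∀ i, i ≠ 0 → τ i = 1 + ∑ j,
        (β * (if j ∈ ringConf n i then (1 : ℝ) / 2 else 0) + (1 - β) * η j) * τ j) →
      τ 1 < τ 2) :=
  ⟨fun _ _ hb2 hsb hbne => util2_update_ringConf_lt hn hβ0 hβ1 hη hb2 hsb hbne,
    fun hn4 _ hτ0 hτ =>
      ringConf_hittingTime_one_lt_two hn4 hβ0 hβ1 (fun i => (hη i).le) hηsum hτ0 hτ⟩
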